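/- Under the same residual recursion, the instantaneous covariance satisfies lim_{Δt↓0} Cov[x_{t+Δt} − x_t | x_t = x]/Δt = φ'(0)² · V(x), where V(x) = Cov(ε^W ψ(x) + ε^b). -/

import Mathlib

open MeasureTheory ProbabilityTheory Filter
open Real Set Topology
open scoped NNReal

/-!
Write `G = ε^W ψ(x) + ε^b` and `a = μ^W ψ(x) + μ^b`, so that the increment is
`φ(a Δt + G √Δt)`. The normalized increment `φ(a Δt + G √Δt) / √Δt` tends pointwise to
`φ'(0) G` (chain rule for `s ↦ φ(a s² + G s)` at `s = 0`), and the growth bound on `φ''` gives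
`|φ y| ≤ M |y| e^{c|y|}`, which dominates it uniformly in `Δt ≤ 1` by `const · e^{(c+1)|G|}`.
Gaussian variables have all exponential moments, so dominated convergence applies both to the
mixed second moment and to the means; since `G` is centered, the covariance divided by `Δt`
tends to `φ'(0)² E[G G'] = φ'(0)² V(x)`.
-/

lemma abs_sub_le_mul_abs_mul_exp {f : ℝ → ℝ} (hf : Differentiable ℝ f) {M c : ℝ} (hc : 0 ≤ c)
    (hbd : ∀ t, |deriv f t| ≤ M * exp (c * |t|)) (y : ℝ) :
    |f y - f 0| ≤ M * |y| * exp (c * |y|) := by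
  have hM : 0 ≤ M := by simpa using (abs_nonneg _).trans (hbd 0)
  have hderiv : ∀ t ∈ uIcc 0 y, ‖deriv f t‖ ≤ M * exp (c * |y|) := fun t ht => by
    have ht' : |t| ≤ |y| := by simpa using abs_sub_left_of_mem_uIcc ht
    exact (hbd t).trans (by gcongr)
  have := (convex_uIcc 0 y).norm_image_sub_le_of_norm_deriv_le (fun t _ => hf t) hderiv
    left_mem_uIcc right_mem_uIcc
  simpa [mul_right_comm] using this

lemma abs_le_mul_abs_mul_exp_of_abs_iteratedDeriv_two_le {φ : ℝ → ℝ} (hφ : ContDiff ℝ 2 φ)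
    (hφ0 : φ 0 = 0) {C k : ℝ} (hk : 0 ≤ k)
    (h2 : ∀ y, |iteratedDeriv 2 φ y| ≤ C * exp (k * |y|)) (y : ℝ) :
    |φ y| ≤ (|deriv φ 0| + C) * |y| * exp ((k + 1) * |y|) := by
  have hC : 0 ≤ C := by simpa using (abs_nonneg _).trans (h2 0)
  have h1 : ∀ t, |deriv φ t| ≤ (|deriv φ 0| + C) * exp ((k + 1) * |t|) := fun t => by
    have hdd : Differentiable ℝ (deriv φ) := by
      simpa using hφ.differentiable_iteratedDeriv 1 (by norm_num)
    have hsub := abs_sub_le_mul_abs_mul_exp hdd hk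
      (fun t => by simpa [iteratedDeriv_succ] using h2 t) t
    have hexp : exp ((k + 1) * |t|) = exp (k * |t|) * exp |t| := by
      rw [← exp_add]; ring_nf
    have ht : |t| ≤ exp |t| := by linarith [add_one_le_exp |t|]
    have h1le : 1 ≤ exp ((k + 1) * |t|) := one_le_exp (by positivity)
    calc |deriv φ t| ≤ |deriv φ 0| + C * |t| * exp (k * |t|) := by
          linarith [abs_sub_abs_le_abs_sub (deriv φ t) (deriv φ 0)]
      _ ≤ |deriv φ 0| * exp ((k + 1) * |t|) + C * exp ((k + 1) * |t|) := by
          have hlin : C * |t| * exp (k * |t|) ≤ C * exp ((k + 1) * |t|) := by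
            rw [hexp, mul_assoc, mul_comm |t|]
            gcongr
          linarith [le_mul_of_one_le_right (abs_nonneg (deriv φ 0)) h1le]
      _ = (|deriv φ 0| + C) * exp ((k + 1) * |t|) := by ring
  simpa [hφ0] using abs_sub_le_mul_abs_mul_exp (hφ.differentiable (by norm_num))
    (by linarith) h1 y

lemma tendsto_apply_mul_add_mul_sqrt_div_sqrt {φ : ℝ → ℝ} {L : ℝ} (hφ : HasDerivAt φ L 0)
    (hφ0 : φ 0 = 0) (a b : ℝ) :
    Tendsto (fun T => φ (a * T + b * √T) / √T) (𝓝[>] 0) (𝓝 (L * b)) := by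
  have hinner : HasDerivAt (fun s : ℝ => a * s ^ 2 + b * s) b 0 := by
    simpa using ((hasDerivAt_pow 2 (0 : ℝ)).const_mul a).fun_add
      ((hasDerivAt_id' (0 : ℝ)).const_mul b)
  have hφ' : HasDerivAt φ L ((fun s : ℝ => a * s ^ 2 + b * s) 0) := by simpa using hφ
  have hsqrt : Tendsto (fun T : ℝ => √T) (𝓝[>] 0) (𝓝[>] 0) := by
    refine tendsto_nhdsWithin_iff.mpr
      ⟨?_, eventually_nhdsWithin_of_forall fun T hT => sqrt_pos.mpr hT⟩
    simpa using (continuous_sqrt.tendsto 0).mono_left nhdsWithin_le_nhds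
  refine ((hφ'.comp 0 hinner).tendsto_slope_zero_right.comp hsqrt).congr' ?_
  filter_upwards [self_mem_nhdsWithin] with T hT
  simp [hφ0, sq_sqrt (le_of_lt hT), div_eq_inv_mul]

lemma abs_apply_mul_add_mul_sqrt_div_sqrt_le {φ : ℝ → ℝ} {M c : ℝ} (hc : 0 ≤ c)
    (hbd : ∀ y, |φ y| ≤ M * |y| * exp (c * |y|)) (a b : ℝ) {T : ℝ} (hT : T ∈ Ioc 0 1) :
    |φ (a * T + b * √T) / √T| ≤ M * exp ((c + 1) * |a|) * exp ((c + 1) * |b|) := by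
  have hM : 0 ≤ M := by
    have := (abs_nonneg _).trans (hbd 1)
    simpa using nonneg_of_mul_nonneg_left this (exp_pos _)
  set s := √T
  have hs : 0 < s := sqrt_pos.mpr hT.1
  have hs1 : s ≤ 1 := sqrt_le_one.mpr hT.2
  have hTs : T ≤ s := calc
    T = s * s := (mul_self_sqrt hT.1.le).symm
    _ ≤ s := mul_le_of_le_one_left hs.le hs1
  set B := |a| + |b| with hBdef
  have hy : |a * T + b * s| ≤ s * B := by
    calc |a * T + b * s| ≤ |a| * T + |b| * s := by
          simpa [abs_mul, abs_of_pos hT.1, abs_of_pos hs] using abs_add_le (a * T) (b * s)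
      _ ≤ s * B := by nlinarith [abs_nonneg a]
  have hyB : |a * T + b * s| ≤ B := hy.trans (by nlinarith [abs_nonneg a, abs_nonneg b])
  have hB : B ≤ exp B := by linarith [add_one_le_exp B]
  rw [abs_div, abs_of_pos hs, div_le_iff₀ hs]
  calc |φ (a * T + b * s)| ≤ M * (s * B) * exp (c * B) :=
        (hbd _).trans (by gcongr)
    _ ≤ M * (s * exp B) * exp (c * B) := by gcongr
    _ = M * (exp B * exp (c * B)) * s := by ring
    _ = M * exp ((c + 1) * |a|) * exp ((c + 1) * |b|) * s := by
        rw [← exp_add, mul_assoc M (exp ((c + 1) * |a|)), ← exp_add, hBdef]; ring_nf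

section

variable {Ω : Type*} {mΩ : MeasurableSpace Ω} {μ : Measure Ω}

lemma integrable_exp_mul_abs_add_abs {X Y : Ω → ℝ}
    (hX : ∀ t, Integrable (fun ω => exp (t * X ω)) μ)
    (hY : ∀ t, Integrable (fun ω => exp (t * Y ω)) μ) (c : ℝ) :
    Integrable (fun ω => exp (c * (|X ω| + |Y ω|))) μ := by
  have hXm := aemeasurable_of_integrable_exp_mul zero_ne_one (hX 0) (hX 1)
  have hYm := aemeasurable_of_integrable_exp_mul zero_ne_one (hY 0) (hY 1)
  refine ((integrable_exp_mul_abs (hX (2 * c)) (hX _)).add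
    (integrable_exp_mul_abs (hY (2 * c)) (hY _))).mono' (by fun_prop) (ae_of_all _ fun ω => ?_)
  -- `c (x + y)` is at most the larger of `2 c x` and `2 c y`
  rw [norm_of_nonneg (exp_pos _).le]
  rcases le_total (c * |X ω|) (c * |Y ω|) with h | h
  · exact (exp_le_exp.mpr (by linarith)).trans (le_add_of_nonneg_left (exp_pos _).le)
  · exact (exp_le_exp.mpr (by linarith)).trans (le_add_of_nonneg_right (exp_pos _).le)

lemma tendsto_integral_apply_mul_add_mul_sqrt_div_sqrt {φ : ℝ → ℝ} {L M c : ℝ}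
    (hφm : Measurable φ) (hφ : HasDerivAt φ L 0) (hφ0 : φ 0 = 0) (hc : 0 ≤ c)
    (hbd : ∀ y, |φ y| ≤ M * |y| * exp (c * |y|)) {G : Ω → ℝ}
    (hG : ∀ t, Integrable (fun ω => exp (t * G ω)) μ) (a : ℝ) :
    Tendsto (fun T => ∫ ω, φ (a * T + G ω * √T) / √T ∂μ) (𝓝[>] 0)
      (𝓝 (∫ ω, L * G ω ∂μ)) := by
  have hGm := aemeasurable_of_integrable_exp_mul zero_ne_one (hG 0) (hG 1)
  refine tendsto_integral_filter_of_dominated_convergence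
    (fun ω => M * exp ((c + 1) * |a|) * exp ((c + 1) * |G ω|))
    (Eventually.of_forall fun T => ?_) ?_
    ((integrable_exp_mul_abs (hG _) (hG _)).const_mul _)
    (ae_of_all _ fun ω => tendsto_apply_mul_add_mul_sqrt_div_sqrt hφ hφ0 a (G ω))
  · exact ((hφm.comp_aemeasurable (by fun_prop)).div_const _).aestronglyMeasurable
  · filter_upwards [Ioc_mem_nhdsGT zero_lt_one] with T hT
    exact ae_of_all _ fun ω => abs_apply_mul_add_mul_sqrt_div_sqrt_le hc hbd a (G ω) hT

theorem tendsto_integral_mul_sub_integral_mul_integral_div {φ : ℝ → ℝ} {L M c : ℝ}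
    (hφm : Measurable φ) (hφ : HasDerivAt φ L 0) (hφ0 : φ 0 = 0) (hc : 0 ≤ c)
    (hbd : ∀ y, |φ y| ≤ M * |y| * exp (c * |y|)) {G G' : Ω → ℝ}
    (hG : ∀ t, Integrable (fun ω => exp (t * G ω)) μ)
    (hG' : ∀ t, Integrable (fun ω => exp (t * G' ω)) μ) (a a' : ℝ) :
    Tendsto (fun T => ((∫ ω, φ (a * T + G ω * √T) * φ (a' * T + G' ω * √T) ∂μ)
        - (∫ ω, φ (a * T + G ω * √T) ∂μ) * (∫ ω, φ (a' * T + G' ω * √T) ∂μ)) / T)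
      (𝓝[>] 0) (𝓝 (L ^ 2 * ((∫ ω, G ω * G' ω ∂μ) - (∫ ω, G ω ∂μ) * ∫ ω, G' ω ∂μ))) := by
  have hGm := aemeasurable_of_integrable_exp_mul zero_ne_one (hG 0) (hG 1)
  have hG'm := aemeasurable_of_integrable_exp_mul zero_ne_one (hG' 0) (hG' 1)
  have hprod : Tendsto
      (fun T => ∫ ω, φ (a * T + G ω * √T) / √T * (φ (a' * T + G' ω * √T) / √T) ∂μ) (𝓝[>] 0)
      (𝓝 (∫ ω, L * G ω * (L * G' ω) ∂μ)) := by
    refine tendsto_integral_filter_of_dominated_convergence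
      (fun ω => M * exp ((c + 1) * |a|) * (M * exp ((c + 1) * |a'|))
        * exp ((c + 1) * (|G ω| + |G' ω|)))
      (Eventually.of_forall fun T => ?_) ?_
      ((integrable_exp_mul_abs_add_abs hG hG' _).const_mul _)
      (ae_of_all _ fun ω => (tendsto_apply_mul_add_mul_sqrt_div_sqrt hφ hφ0 a (G ω)).mul
        (tendsto_apply_mul_add_mul_sqrt_div_sqrt hφ hφ0 a' (G' ω)))
    · exact (((hφm.comp_aemeasurable (by fun_prop)).div_const _).mul
        ((hφm.comp_aemeasurable (by fun_prop)).div_const _)).aestronglyMeasurable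
    · filter_upwards [Ioc_mem_nhdsGT zero_lt_one] with T hT
      refine ae_of_all _ fun ω => ?_
      rw [norm_mul, mul_add, exp_add, mul_mul_mul_comm]
      exact mul_le_mul (abs_apply_mul_add_mul_sqrt_div_sqrt_le hc hbd a (G ω) hT)
        (abs_apply_mul_add_mul_sqrt_div_sqrt_le hc hbd a' (G' ω) hT) (abs_nonneg _)
        ((abs_nonneg _).trans (abs_apply_mul_add_mul_sqrt_div_sqrt_le hc hbd a (G ω) hT))
  have hlim := hprod.sub
    ((tendsto_integral_apply_mul_add_mul_sqrt_div_sqrt hφm hφ hφ0 hc hbd hG a).mul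
      (tendsto_integral_apply_mul_add_mul_sqrt_div_sqrt hφm hφ hφ0 hc hbd hG' a'))
  convert hlim.congr' ?_ using 2
  · simp only [mul_mul_mul_comm L, integral_const_mul]
    ring
  · filter_upwards [self_mem_nhdsWithin] with T (hT : 0 < T)
    simp only [div_mul_div_comm, mul_self_sqrt hT.le, integral_div]
    ring

lemma aemeasurable_of_map_eq_gaussianReal {X : Ω → ℝ} {m : ℝ} {v : ℝ≥0}
    (hX : μ.map X = gaussianReal m v) : AEMeasurable X μ :=
  -- `Measure.map` sends a function that is not a.e.-measurable to `0`
  .of_map_ne_zero (by simp [hX, NeZero.ne])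

lemma integrable_exp_mul_of_map_eq_gaussianReal {X : Ω → ℝ} {m : ℝ} {v : ℝ≥0}
    (hX : μ.map X = gaussianReal m v) (t : ℝ) : Integrable (fun ω => exp (t * X ω)) μ :=
  (integrable_map_measure (g := fun x => exp (t * x)) (by fun_prop)
    (aemeasurable_of_map_eq_gaussianReal hX)).mp
    (hX ▸ integrable_exp_mul_gaussianReal t)

lemma integral_eq_of_map_eq_gaussianReal {X : Ω → ℝ} {m : ℝ} {v : ℝ≥0}
    (hX : μ.map X = gaussianReal m v) : ∫ ω, X ω ∂μ = m :=
  (HasLaw.integral_eq ⟨aemeasurable_of_map_eq_gaussianReal hX, hX⟩).trans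
    integral_id_gaussianReal

lemma exists_map_sum_mul_add_eq_gaussianReal {D : ℕ} {εW : Ω → Fin D → Fin D → ℝ}
    {εb : Ω → Fin D → ℝ}
    (hW : ∀ c : Fin D × Fin D → ℝ,
      ∃ v, μ.map (fun ω => ∑ p : Fin D × Fin D, c p * εW ω p.1 p.2) = gaussianReal 0 v)
    (hb : ∀ c : Fin D → ℝ, ∃ v, μ.map (fun ω => ∑ d, c d * εb ω d) = gaussianReal 0 v)
    (hindep : IndepFun εW εb μ) (w : Fin D → ℝ) (e : Fin D) :
    ∃ v, μ.map (fun ω => ∑ i, εW ω e i * w i + εb ω e) = gaussianReal 0 v := by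
  obtain ⟨vW, hvW⟩ := hW fun p => if p.1 = e then w p.2 else 0
  obtain ⟨vb, hvb⟩ := hb fun d => if d = e then 1 else 0
  have hindep' := hindep.comp
    (φ := fun M : Fin D → Fin D → ℝ =>
      ∑ p : Fin D × Fin D, (if p.1 = e then w p.2 else 0) * M p.1 p.2)
    (ψ := fun b : Fin D → ℝ => ∑ d, (if d = e then 1 else 0) * b d) (by fun_prop) (by fun_prop)
  refine ⟨vW + vb, ?_⟩
  convert gaussianReal_add_gaussianReal_of_indepFun hindep' hvW hvb using 2
  · ext ω
    simp [Fintype.sum_prod_type, mul_comm]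
  · rw [add_zero]

end

theorem stmt_11_general {Ω : Type*} [MeasureSpace Ω]
    {D : ℕ} (ψ : (Fin D → ℝ) → (Fin D → ℝ)) (x : Fin D → ℝ)
    (φ : ℝ → ℝ) (hφ : ContDiff ℝ 3 φ) (hφ0 : φ 0 = 0)
    (k C : ℝ) (hk : 0 < k)
    (hgrowth : ∀ y : ℝ,
      |iteratedDeriv 2 φ y| + |iteratedDeriv 3 φ y| ≤ C * Real.exp (k * |y|))
    (μW : Matrix (Fin D) (Fin D) ℝ) (μb : Fin D → ℝ)
    (SW : Matrix (Fin D × Fin D) (Fin D × Fin D) ℝ) (Sb : Matrix (Fin D) (Fin D) ℝ)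
    (εW : Ω → Fin D → Fin D → ℝ) (εb : Ω → Fin D → ℝ)
    -- ε^W is a centered Gaussian matrix with covariance SW between its entries:
    (hWgauss : ∀ c : Fin D × Fin D → ℝ,
      Measure.map (fun ω => ∑ p : Fin D × Fin D, c p * εW ω p.1 p.2) ℙ
        = gaussianReal 0 ((∑ p : Fin D × Fin D, ∑ q : Fin D × Fin D,
            c p * SW p q * c q).toNNReal))
    -- ε^b is a centered Gaussian vector with covariance Sb:
    (hbgauss : ∀ c : Fin D → ℝ,
      Measure.map (fun ω => ∑ d, c d * εb ω d) ℙ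
        = gaussianReal 0 ((∑ d, ∑ d', c d * Sb d d' * c d').toNNReal))
    (hindep : IndepFun εW εb ℙ)
    -- the increment of the residual recursion, conditionally on the state x:
    (Δx : ℝ → Ω → Fin D → ℝ)
    (hΔx : ∀ Δt ω d, Δx Δt ω d
      = φ (∑ i, (μW d i * Δt + εW ω d i * Real.sqrt Δt) * ψ x i
            + (μb d * Δt + εb ω d * Real.sqrt Δt)))
    -- the covariance matrix V(x) of ε^W ψ(x) + ε^b:
    (V : Matrix (Fin D) (Fin D) ℝ)
    (hV : ∀ d d', V d d' = ∫ ω, (∑ i, εW ω d i * ψ x i + εb ω d)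
                              * (∑ i, εW ω d' i * ψ x i + εb ω d')) :
    ∀ d d' : Fin D,
      Tendsto (fun Δt : ℝ =>
          ((∫ ω, Δx Δt ω d * Δx Δt ω d')
            - (∫ ω, Δx Δt ω d) * (∫ ω, Δx Δt ω d')) / Δt)
        (nhdsWithin 0 (Set.Ioi 0))
        (nhds ((deriv φ 0) ^ 2 * V d d')) := by
  intro d d'
  have hlaw := exists_map_sum_mul_add_eq_gaussianReal (fun c => ⟨_, hWgauss c⟩)
    (fun c => ⟨_, hbgauss c⟩) hindep (ψ x)
  obtain ⟨v, hg⟩ := hlaw d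
  obtain ⟨v', hg'⟩ := hlaw d'
  have hφbd := abs_le_mul_abs_mul_exp_of_abs_iteratedDeriv_two_le (hφ.of_le (by norm_num)) hφ0
    hk.le fun y => (le_add_of_nonneg_right (abs_nonneg _)).trans (hgrowth y)
  have hlim := tendsto_integral_mul_sub_integral_mul_integral_div hφ.continuous.measurable
    (hφ.differentiable (by norm_num) 0).hasDerivAt hφ0 (by linarith) hφbd
    (integrable_exp_mul_of_map_eq_gaussianReal hg) (integrable_exp_mul_of_map_eq_gaussianReal hg')
    (∑ i, μW d i * ψ x i + μb d) (∑ i, μW d' i * ψ x i + μb d')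
  rw [integral_eq_of_map_eq_gaussianReal hg, integral_eq_of_map_eq_gaussianReal hg', mul_zero,
    sub_zero, ← hV] at hlim
  have hΔx' : ∀ T ω e, Δx T ω e
      = φ ((∑ i, μW e i * ψ x i + μb e) * T + (∑ i, εW ω e i * ψ x i + εb ω e) * √T) := by
    intro T ω e
    rw [hΔx]
    congr 1
    simp only [add_mul, Finset.sum_add_distrib, Finset.sum_mul, mul_right_comm _ T,
      mul_right_comm _ √T]
    ring
  simpa only [hΔx'] using hlim

/-- Under the residual recursion
`x_{t+Δt} = x_t + φ(ΔW_t ψ(x_t) + Δb_t)`, the instantaneous covariance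
satisfies `lim_{Δt↓0} Cov[Δx | x]/Δt = φ'(0)² V(x)` where
`V(x) = Cov(ε^W ψ(x) + ε^b)`. -/
theorem stmt_11 {Ω : Type*} [MeasureSpace Ω] [IsProbabilityMeasure (ℙ : Measure Ω)]
    {D : ℕ} (ψ : (Fin D → ℝ) → (Fin D → ℝ)) (x : Fin D → ℝ)
    (φ : ℝ → ℝ) (hφ : ContDiff ℝ 3 φ) (hφ0 : φ 0 = 0)
    (k C : ℝ) (hk : 0 < k) (hC : 0 ≤ C)
    (hgrowth : ∀ y : ℝ,
      |iteratedDeriv 2 φ y| + |iteratedDeriv 3 φ y| ≤ C * Real.exp (k * |y|))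
    (μW : Matrix (Fin D) (Fin D) ℝ) (μb : Fin D → ℝ)
    (SW : Matrix (Fin D × Fin D) (Fin D × Fin D) ℝ) (Sb : Matrix (Fin D) (Fin D) ℝ)
    (hSW : SW.PosSemidef) (hSb : Sb.PosSemidef)
    (εW : Ω → Fin D → Fin D → ℝ) (εb : Ω → Fin D → ℝ)
    (hWmeas : Measurable εW) (hbmeas : Measurable εb)
    -- ε^W is a centered Gaussian matrix with covariance SW between its entries:
    (hWgauss : ∀ c : Fin D × Fin D → ℝ,
      Measure.map (fun ω => ∑ p : Fin D × Fin D, c p * εW ω p.1 p.2) ℙ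
        = gaussianReal 0 ((∑ p : Fin D × Fin D, ∑ q : Fin D × Fin D,
            c p * SW p q * c q).toNNReal))
    -- ε^b is a centered Gaussian vector with covariance Sb:
    (hbgauss : ∀ c : Fin D → ℝ,
      Measure.map (fun ω => ∑ d, c d * εb ω d) ℙ
        = gaussianReal 0 ((∑ d, ∑ d', c d * Sb d d' * c d').toNNReal))
    (hindep : IndepFun εW εb ℙ)
    -- the increment of the residual recursion, conditionally on the state x:
    (Δx : ℝ → Ω → Fin D → ℝ)
    (hΔx : ∀ Δt ω d, Δx Δt ω d
      = φ (∑ i, (μW d i * Δt + εW ω d i * Real.sqrt Δt) * ψ x i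
            + (μb d * Δt + εb ω d * Real.sqrt Δt)))
    -- the covariance matrix V(x) of ε^W ψ(x) + ε^b:
    (V : Matrix (Fin D) (Fin D) ℝ)
    (hV : ∀ d d', V d d' = ∫ ω, (∑ i, εW ω d i * ψ x i + εb ω d)
                              * (∑ i, εW ω d' i * ψ x i + εb ω d')) :
    ∀ d d' : Fin D,
      Tendsto (fun Δt : ℝ =>
          ((∫ ω, Δx Δt ω d * Δx Δt ω d')
            - (∫ ω, Δx Δt ω d) * (∫ ω, Δx Δt ω d')) / Δt)
        (nhdsWithin 0 (Set.Ioi 0))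
        (nhds ((deriv φ 0) ^ 2 * V d d')) :=
  stmt_11_general ψ x φ hφ hφ0 k C hk hgrowth μW μb SW Sb εW εb hWgauss hbgauss hindep Δx hΔx V hV
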